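/- Let μ be the alternating bilinear map on ℝ⁵ determined (together with antisymmetry) by the nonzero brackets on the standard basis e1,…,e5: [e2,e3] = 2e2, [e4,e5] = −e2, [e1,e5] = −e4, [e3,e4] = −e4, [e3,e5] = −e5, [e1,e4] = e5, all other brackets of basis vectors zero. Then μ satisfies the Jacobi identity (it defines a solvable but not completely solvable Lie algebra, isomorphic to s_{5,45}, the Lie algebra of homotheties of 3-dimensional nilgeometry), and μ is in the null cone of the O(B)-action, where B is the bilinear form on ℝ⁵ with B(e1,e2) = B(e2,e1) = B(e3,e4) = B(e4,e3) = 1, B(e5,e5) = 1 and all other pairings of basis vectors zero (a form of signature (2,3)). -/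
import Mathlib


/-- The isometry group `O(B)` of a bilinear form `B`. -/
def IsometryGrp {V : Type*} [AddCommGroup V] [Module ℝ V]
    (B : LinearMap.BilinForm ℝ V) : Set (V ≃ₗ[ℝ] V) :=
  {A | ∀ x y, B (A x) (A y) = B x y}

/-- `μ` is in the null cone of the `O(B)`-action: `0` lies in the closure of the orbit
`O(B)·μ`, `(A·μ)(x,y) = A⁻¹(μ(Ax,Ay))`, in the topology of pointwise convergence. -/
def InNullCone {V : Type*} [AddCommGroup V] [Module ℝ V] [TopologicalSpace V]
    (B : LinearMap.BilinForm ℝ V) (μ : V → V → V) : Prop :=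
  (0 : V → V → V) ∈
    closure {f : V → V → V | ∃ A ∈ IsometryGrp B, f = fun x y => A.symm (μ (A x) (A y))}

/-- The bracket on `ℝ⁵` (standard basis `e1 = e 0, …, e5 = e 4`) given by the alternating
bilinear extension of `[e2,e3] = 2e2`, `[e4,e5] = -e2`, `[e1,e5] = -e4`, `[e3,e4] = -e4`,
`[e3,e5] = -e5`, `[e1,e4] = e5`, all other brackets of basis vectors zero.  It defines the
solvable, not completely solvable, Lie algebra `s_{5,45}`. -/
def s545bracket : (Fin 5 → ℝ) → (Fin 5 → ℝ) → (Fin 5 → ℝ) :=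
  fun x y =>
    ![0,
      2 * (x 1 * y 2 - x 2 * y 1) - (x 3 * y 4 - x 4 * y 3),
      0,
      -(x 0 * y 4 - x 4 * y 0) - (x 2 * y 3 - x 3 * y 2),
      (x 0 * y 3 - x 3 * y 0) - (x 2 * y 4 - x 4 * y 2)]

/-- The bilinear form on `ℝ⁵` with `B(e1,e2) = B(e2,e1) = B(e3,e4) = B(e4,e3) = 1`,
`B(e5,e5) = 1` and all other pairings of basis vectors zero (signature `(2,3)`). -/
noncomputable def neutralForm5 : LinearMap.BilinForm ℝ (Fin 5 → ℝ) :=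
  Matrix.toLinearMap₂' ℝ
    (!![0,1,0,0,0; 1,0,0,0,0; 0,0,0,1,0; 0,0,1,0,0; 0,0,0,0,1] : Matrix (Fin 5) (Fin 5) ℝ)

noncomputable def dvec (t : ℝ) : Fin 5 → ℝ := ![t^2, t⁻¹^2, t, t⁻¹, 1]

lemma dvec_ne_zero {t : ℝ} (ht : t ≠ 0) (i : Fin 5) : dvec t i ≠ 0 := by
  fin_cases i <;> simp [dvec] <;> positivity

noncomputable def Adiag {t : ℝ} (ht : t ≠ 0) : (Fin 5 → ℝ) ≃ₗ[ℝ] (Fin 5 → ℝ) :=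
  LinearEquiv.piCongrRight fun i => LinearEquiv.smulOfNeZero ℝ ℝ (dvec t i) (dvec_ne_zero ht i)

lemma Adiag_apply {t : ℝ} (ht : t ≠ 0) (x : Fin 5 → ℝ) (i : Fin 5) :
    Adiag ht x i = dvec t i * x i := by simp [Adiag]

lemma Adiag_symm_apply {t : ℝ} (ht : t ≠ 0) (x : Fin 5 → ℝ) (i : Fin 5) :
    (Adiag ht).symm x i = (dvec t i)⁻¹ * x i := by
  simp [Adiag, LinearEquiv.smulOfNeZero, LinearEquiv.smulOfUnit,
    DistribMulAction.toLinearEquiv, Units.smul_def]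

lemma Adiag_isometry {t : ℝ} (ht : t ≠ 0) : Adiag ht ∈ IsometryGrp neutralForm5 := by
  intro x y
  simp only [neutralForm5, Matrix.toLinearMap₂'_apply, Fin.sum_univ_five, Adiag_apply,
    smul_eq_mul]
  simp [dvec, Matrix.vecHead, Matrix.vecTail]
  field_simp

noncomputable def Ffam (t : ℝ) : (Fin 5 → ℝ) → (Fin 5 → ℝ) → (Fin 5 → ℝ) :=
  fun x y =>
    ![0,
      t * (2 * (x 1 * y 2 - x 2 * y 1) - (x 3 * y 4 - x 4 * y 3)),
      0,
      -(t^3 * (x 0 * y 4 - x 4 * y 0)) - t * (x 2 * y 3 - x 3 * y 2),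
      t * ((x 0 * y 3 - x 3 * y 0) - (x 2 * y 4 - x 4 * y 2))]

lemma Ffam_eq {t : ℝ} (ht : t ≠ 0) :
    Ffam t = fun x y => (Adiag ht).symm (s545bracket (Adiag ht x) (Adiag ht y)) := by
  funext x y
  funext i
  rw [Adiag_symm_apply]
  fin_cases i <;>
    simp [Ffam, s545bracket, Adiag_apply, dvec] <;> field_simp <;> ring

/-- `s545bracket` satisfies the Jacobi identity and is in the null cone of the
`O(B)`-action for the above form `B` of signature `(2,3)`. -/
theorem s545_jacobi_and_in_null_cone :
    (∀ x y z : Fin 5 → ℝ,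
      s545bracket x (s545bracket y z) + s545bracket y (s545bracket z x) +
        s545bracket z (s545bracket x y) = 0) ∧
    InNullCone neutralForm5 s545bracket := by
  constructor
  · intro x y z
    funext i
    fin_cases i <;> simp [s545bracket] <;> ring
  · have hF0 : Ffam 0 = 0 := by
      funext x y
      funext i
      fin_cases i <;> simp [Ffam]
    have hcont : Continuous Ffam := by
      apply continuous_pi; intro x; apply continuous_pi; intro y; apply continuous_pi; intro i
      fin_cases i <;> simp [Ffam] <;> fun_prop
    rw [InNullCone, ← hF0]
    refine mem_closure_of_tendsto
      ((hcont.tendsto 0).mono_left (nhdsWithin_le_nhds (s := {(0:ℝ)}ᶜ))) ?_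
    filter_upwards [eventually_mem_nhdsWithin] with t ht
    exact ⟨Adiag ht, Adiag_isometry ht, Ffam_eq ht⟩
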